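/- The 2-marginals for 3-tables of size (3,4,6) obtained by applying the Theorem 1.4 construction to the (2,2,2) bounds p with p_{1,1,1}=p_{2,2,1}=p_{1,2,2}=p_{2,1,2}=1, p_{1,2,1}=p_{2,1,1}=p_{1,1,2}=p_{2,2,2}=0 and all 1-marginals equal to 1 are real-feasible but integer-infeasible: there exists a nonnegative real (3,4,6)-array with these 2-marginals (all its entries in {0, 1/2}), but no nonnegative integer array with these 2-marginals exists. -/

import Mathlib

/-- The (2,2,2) bound array of Vlach's example: ones exactly at
(1,1,1),(2,2,1),(1,2,2),(2,1,2), i.e. at even coordinate sums. -/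
def vlachBound : Fin 2 → Fin 2 → Fin 2 → ℕ :=
  fun i j k => if (i.1 + j.1 + k.1) % 2 = 0 then 1 else 0


/-- `U = min (max_i u1 i) (max_j u2 j)` of the Theorem 1.4 construction. -/
def bigU (r c : ℕ) (u1 : Fin r → ℕ) (u2 : Fin c → ℕ) : ℕ :=
  min (Finset.univ.sup u1) (Finset.univ.sup u2)

open Sum in
/-- `v_{+,ij,gro k}` of the construction. -/
def margA (r c h : ℕ) (u1 : Fin r → ℕ) (u2 : Fin c → ℕ)
    (p : Fin r → Fin c → Fin h → ℕ) :
    Fin r × Fin c → (Fin h ⊕ Fin r ⊕ Fin c) → ℝ := fun a g =>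
  match g with
  | inl k => (p a.1 a.2 k : ℝ)
  | inr (inl i) => if i = a.1 then (bigU r c u1 u2 : ℝ) else 0
  | inr (inr j) => if j = a.2 then (bigU r c u1 u2 : ℝ) else 0

/-- `v_{t,ij,+}` of the construction. -/
def margT (r c h : ℕ) (u1 : Fin r → ℕ) (u2 : Fin c → ℕ)
    (p : Fin r → Fin c → Fin h → ℕ) :
    Fin 3 → Fin r × Fin c → ℝ := fun t a =>
  if t = 1 then ∑ k, (p a.1 a.2 k : ℝ) else (bigU r c u1 u2 : ℝ)

open Sum in
/-- `v_{t,+,gro k}` of the construction. -/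
def margG (r c h : ℕ) (u1 : Fin r → ℕ) (u2 : Fin c → ℕ) (u3 : Fin h → ℕ)
    (p : Fin r → Fin c → Fin h → ℕ) :
    Fin 3 → (Fin h ⊕ Fin r ⊕ Fin c) → ℝ := fun t g =>
  match g with
  | inl k => if t = 0 then (u3 k : ℝ)
      else if t = 1 then (∑ i, ∑ j, (p i j k : ℝ)) - (u3 k : ℝ) else 0
  | inr (inl i) => if t = 0 then (c : ℝ) * (bigU r c u1 u2 : ℝ) - (u1 i : ℝ)
      else if t = 1 then 0 else (u1 i : ℝ)
  | inr (inr j) => if t = 0 then 0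
      else if t = 1 then (u2 j : ℝ)
      else (r : ℝ) * (bigU r c u1 u2 : ℝ) - (u2 j : ℝ)

/-!
Over `ℝ`, the halved bound `vlachBound / 2` has all 1-margins equal to `1`, and the table that the
construction assigns to it has the required 2-margins and entries in `{0, 1/2}`. Conversely, in
any nonnegative table with these 2-margins the zero margins force all but one entry of each row
and column group to vanish, so layer `0` of the `inl` block is a table bounded by `p` with the
prescribed 1-margins, integral if the big table is. For Vlach's bound there is none: on the four
cells allowed by the bound, the value `a` at `(0,0,0)` forces `1 - a` at the other three through
the planes `i = 0`, `j = 0`, `k = 0`, and then the plane `i = 1` reads `2 (1 - a) = 1`.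
-/

open Sum

section Tables

variable {r c h : ℕ}

def HasPlaneSums {M : Type*} [AddCommMonoid M] (x : Fin r → Fin c → Fin h → M)
    (u1 : Fin r → M) (u2 : Fin c → M) (u3 : Fin h → M) : Prop :=
  (∀ i, ∑ j, ∑ k, x i j k = u1 i) ∧ (∀ j, ∑ i, ∑ k, x i j k = u2 j) ∧
    (∀ k, ∑ i, ∑ j, x i j k = u3 k)

theorem HasPlaneSums.of_natCast {R : Type*} [AddCommMonoidWithOne R] [CharZero R]
    {x : Fin r → Fin c → Fin h → ℕ} {u1 : Fin r → ℕ} {u2 : Fin c → ℕ} {u3 : Fin h → ℕ}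
    (hx : HasPlaneSums (fun i j k => (x i j k : R)) (fun i => (u1 i : R)) (fun j => (u2 j : R))
      (fun k => (u3 k : R))) :
    HasPlaneSums x u1 u2 u3 := by
  simpa only [HasPlaneSums, ← Nat.cast_sum, Nat.cast_inj] using hx

def HasConstructionMargins (u1 : Fin r → ℕ) (u2 : Fin c → ℕ) (u3 : Fin h → ℕ)
    (p : Fin r → Fin c → Fin h → ℕ) (y : Fin 3 → Fin r × Fin c → (Fin h ⊕ Fin r ⊕ Fin c) → ℝ) :
    Prop :=
  (∀ t a, ∑ g, y t a g = margT r c h u1 u2 p t a) ∧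
  (∀ t g, ∑ a, y t a g = margG r c h u1 u2 u3 p t g) ∧
  (∀ a g, ∑ t, y t a g = margA r c h u1 u2 p a g)

/-- The table that Theorem 1.4 assigns to an `r × c × h` table `x`. -/
def liftTable (u1 : Fin r → ℕ) (u2 : Fin c → ℕ) (p : Fin r → Fin c → Fin h → ℕ)
    (x : Fin r → Fin c → Fin h → ℝ) : Fin 3 → Fin r × Fin c → (Fin h ⊕ Fin r ⊕ Fin c) → ℝ
  | t, a, inl k => ![x a.1 a.2 k, p a.1 a.2 k - x a.1 a.2 k, 0] t
  | t, a, inr (inl i) =>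
      if i = a.1 then ![bigU r c u1 u2 - ∑ k, x a.1 a.2 k, 0, ∑ k, x a.1 a.2 k] t else 0
  | t, a, inr (inr j) =>
      if j = a.2 then ![0, ∑ k, x a.1 a.2 k, bigU r c u1 u2 - ∑ k, x a.1 a.2 k] t else 0

variable {u1 : Fin r → ℕ} {u2 : Fin c → ℕ} {u3 : Fin h → ℕ} {p : Fin r → Fin c → Fin h → ℕ}

theorem hasConstructionMargins_liftTable {x : Fin r → Fin c → Fin h → ℝ}
    (hx : HasPlaneSums x (fun i => (u1 i : ℝ)) (fun j => (u2 j : ℝ)) (fun k => (u3 k : ℝ))) :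
    HasConstructionMargins u1 u2 u3 p (liftTable u1 u2 p x) := by
  obtain ⟨hx1, hx2, hx3⟩ := hx
  refine ⟨fun t a => ?_, fun t g => ?_, fun a g => ?_⟩
  · fin_cases t <;>
      simp [liftTable, margT, Fintype.sum_sum_type, Finset.sum_sub_distrib]
  · rcases g with k | i | j
    · rw [Fintype.sum_prod_type]
      fin_cases t <;> simp [liftTable, margG, Finset.sum_sub_distrib, hx3]
    · rw [Fintype.sum_prod_type_right]
      fin_cases t <;> simp [liftTable, margG, Finset.sum_sub_distrib, hx1]
    · rw [Fintype.sum_prod_type]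
      fin_cases t <;> simp [liftTable, margG, Finset.sum_sub_distrib, hx2]
  · rcases g with k | i | j <;> simp [liftTable, margA, Fin.sum_univ_three]

namespace HasConstructionMargins

variable {y : Fin 3 → Fin r × Fin c → (Fin h ⊕ Fin r ⊕ Fin c) → ℝ}

theorem eq_zero_of_margG_eq_zero (hy : ∀ t a g, 0 ≤ y t a g)
    (hm : HasConstructionMargins u1 u2 u3 p y) {t : Fin 3} {g : Fin h ⊕ Fin r ⊕ Fin c}
    (hg : margG r c h u1 u2 u3 p t g = 0) (a : Fin r × Fin c) : y t a g = 0 :=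
  congrFun ((Fintype.sum_eq_zero_iff_of_nonneg fun a => hy t a g).1 ((hm.2.1 t g).trans hg)) a

theorem eq_zero_of_margA_eq_zero (hy : ∀ t a g, 0 ≤ y t a g)
    (hm : HasConstructionMargins u1 u2 u3 p y) {a : Fin r × Fin c} {g : Fin h ⊕ Fin r ⊕ Fin c}
    (hg : margA r c h u1 u2 p a g = 0) (t : Fin 3) : y t a g = 0 :=
  congrFun ((Fintype.sum_eq_zero_iff_of_nonneg fun t => hy t a g).1 ((hm.2.2 a g).trans hg)) t

theorem apply_row_of_ne (hy : ∀ t a g, 0 ≤ y t a g)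
    (hm : HasConstructionMargins u1 u2 u3 p y)
    (t : Fin 3) {a : Fin r × Fin c} {i : Fin r} (hi : i ≠ a.1) : y t a (inr (inl i)) = 0 :=
  hm.eq_zero_of_margA_eq_zero hy (by simp [margA, hi]) t

theorem apply_col_of_ne (hy : ∀ t a g, 0 ≤ y t a g)
    (hm : HasConstructionMargins u1 u2 u3 p y)
    (t : Fin 3) {a : Fin r × Fin c} {j : Fin c} (hj : j ≠ a.2) : y t a (inr (inr j)) = 0 :=
  hm.eq_zero_of_margA_eq_zero hy (by simp [margA, hj]) t

theorem apply_two_row_self (hy : ∀ t a g, 0 ≤ y t a g)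
    (hm : HasConstructionMargins u1 u2 u3 p y)
    (a : Fin r × Fin c) : y 2 a (inr (inl a.1)) = ∑ k, y 0 a (inl k) := by
  have hT := hm.1 0 a
  have hA := hm.2.2 a (inr (inl a.1))
  rw [Fintype.sum_sum_type, Fintype.sum_sum_type,
    Fintype.sum_eq_single a.1 fun i hi => hm.apply_row_of_ne hy 0 hi,
    Fintype.sum_eq_zero (fun j => y 0 a (inr (inr j))) fun j =>
      hm.eq_zero_of_margG_eq_zero hy (by simp [margG]) a] at hT
  have hrow1 : y 1 a (inr (inl a.1)) = 0 := hm.eq_zero_of_margG_eq_zero hy (by simp [margG]) a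
  simp only [Fin.sum_univ_three, margA, margT, Fin.isValue, Fin.reduceEq, ↓reduceIte,
    add_zero] at hA hT
  linarith

theorem apply_one_col_self (hy : ∀ t a g, 0 ≤ y t a g)
    (hm : HasConstructionMargins u1 u2 u3 p y)
    (a : Fin r × Fin c) : y 1 a (inr (inr a.2)) = ∑ k, y 0 a (inl k) := by
  have hT := hm.1 2 a
  have hA := hm.2.2 a (inr (inr a.2))
  rw [Fintype.sum_sum_type, Fintype.sum_sum_type,
    Fintype.sum_eq_single a.1 fun i hi => hm.apply_row_of_ne hy 2 hi,
    Fintype.sum_eq_single a.2 fun j hj => hm.apply_col_of_ne hy 2 hj,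
    Fintype.sum_eq_zero (fun k => y 2 a (inl k)) fun k =>
      hm.eq_zero_of_margG_eq_zero hy (by simp [margG]) a] at hT
  have hcol0 : y 0 a (inr (inr a.2)) = 0 := hm.eq_zero_of_margG_eq_zero hy (by simp [margG]) a
  simp only [Fin.sum_univ_three, margA, margT, Fin.isValue, Fin.reduceEq, ↓reduceIte,
    zero_add] at hA hT
  linarith [hm.apply_two_row_self hy a]

theorem hasPlaneSums (hy : ∀ t a g, 0 ≤ y t a g)
    (hm : HasConstructionMargins u1 u2 u3 p y) :
    HasPlaneSums (fun i j k => y 0 (i, j) (inl k)) (fun i => (u1 i : ℝ)) (fun j => (u2 j : ℝ))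
      (fun k => (u3 k : ℝ)) := by
  refine ⟨fun i => ?_, fun j => ?_, fun k => ?_⟩
  · have h := hm.2.1 2 (inr (inl i))
    rw [Fintype.sum_prod_type, Fintype.sum_eq_single i fun i' hi' =>
      Fintype.sum_eq_zero _ fun j => hm.apply_row_of_ne hy 2 (Ne.symm hi')] at h
    simpa [margG, ← hm.apply_two_row_self hy] using h
  · have h := hm.2.1 1 (inr (inr j))
    rw [Fintype.sum_prod_type_right, Fintype.sum_eq_single j fun j' hj' =>
      Fintype.sum_eq_zero _ fun i => hm.apply_col_of_ne hy 1 (Ne.symm hj')] at h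
    simpa [margG, ← hm.apply_one_col_self hy] using h
  · simpa [margG, Fintype.sum_prod_type] using hm.2.1 0 (inl k)

theorem apply_zero_dom_le (hy : ∀ t a g, 0 ≤ y t a g)
    (hm : HasConstructionMargins u1 u2 u3 p y)
    (a : Fin r × Fin c) (k : Fin h) : y 0 a (inl k) ≤ p a.1 a.2 k := by
  have hA := hm.2.2 a (inl k)
  simp only [Fin.sum_univ_three, margA] at hA
  linarith [hy 1 a (inl k), hy 2 a (inl k)]

end HasConstructionMargins

end Tables

theorem vlachBound_eq_zero_or_one (i j k : Fin 2) :
    vlachBound i j k = 0 ∨ vlachBound i j k = 1 := by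
  unfold vlachBound; split_ifs <;> simp

theorem sum_vlachBound (i j : Fin 2) : ∑ k, vlachBound i j k = 1 := by
  fin_cases i <;> fin_cases j <;> rfl

theorem bigU_vlach : bigU 2 2 (fun _ => 1) (fun _ => 1) = 1 := rfl

theorem hasPlaneSums_half_vlachBound :
    HasPlaneSums (fun i j k => (vlachBound i j k : ℝ) / 2) (fun _ => ((1 : ℕ) : ℝ))
      (fun _ => ((1 : ℕ) : ℝ)) (fun _ => ((1 : ℕ) : ℝ)) := by
  refine ⟨?_, ?_, ?_⟩ <;> intro n <;> fin_cases n <;> norm_num [Fin.sum_univ_two, vlachBound]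

noncomputable def vlachHalfTable : Fin 3 → Fin 2 × Fin 2 → (Fin 2 ⊕ Fin 2 ⊕ Fin 2) → ℝ :=
  liftTable (fun _ => 1) (fun _ => 1) vlachBound fun i j k => (vlachBound i j k : ℝ) / 2

theorem vlachHalfTable_eq_zero_or_half (t : Fin 3) (a : Fin 2 × Fin 2)
    (g : Fin 2 ⊕ Fin 2 ⊕ Fin 2) :
    vlachHalfTable t a g = 0 ∨ vlachHalfTable t a g = 1 / 2 := by
  have hsum : ∑ k, (vlachBound a.1 a.2 k : ℝ) / 2 = 1 / 2 := by
    rw [← Finset.sum_div, ← Nat.cast_sum, sum_vlachBound, Nat.cast_one]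
  rcases g with k | i | j
  · rcases vlachBound_eq_zero_or_one a.1 a.2 k with hp | hp <;> fin_cases t <;>
      norm_num [vlachHalfTable, liftTable, hp]
  all_goals
    fin_cases t <;> simp only [vlachHalfTable, liftTable, hsum, bigU_vlach] <;> split_ifs <;>
      norm_num

theorem not_hasPlaneSums_of_le_vlachBound {x : Fin 2 → Fin 2 → Fin 2 → ℕ}
    (hx : ∀ i j k, x i j k ≤ vlachBound i j k) :
    ¬ HasPlaneSums x (fun _ => 1) (fun _ => 1) (fun _ => 1) := by
  rintro ⟨hi, hj, hk⟩
  have h001 : x 0 0 1 = 0 := Nat.le_zero.1 (hx 0 0 1)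
  have h010 : x 0 1 0 = 0 := Nat.le_zero.1 (hx 0 1 0)
  have h100 : x 1 0 0 = 0 := Nat.le_zero.1 (hx 1 0 0)
  have h111 : x 1 1 1 = 0 := Nat.le_zero.1 (hx 1 1 1)
  have hi0 := hi 0
  have hi1 := hi 1
  have hj0 := hj 0
  have hk0 := hk 0
  simp only [Fin.sum_univ_two] at hi0 hi1 hj0 hk0
  omega

/-- Vlach's example: the 2-marginals for (3,4,6)-tables obtained by applying
the Theorem 1.4 construction to `vlachBound` with all 1-marginals 1 admit a
nonnegative real array (with all entries 0 or 1/2) but no integer table. -/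
theorem vlach_real_feasible_integer_infeasible :
    (∃ y : Fin 3 → Fin 2 × Fin 2 → (Fin 2 ⊕ Fin 2 ⊕ Fin 2) → ℝ,
      (∀ t a g, 0 ≤ y t a g) ∧
      (∀ t a, ∑ g, y t a g =
        margT 2 2 2 (fun _ => 1) (fun _ => 1) vlachBound t a) ∧
      (∀ t g, ∑ a, y t a g =
        margG 2 2 2 (fun _ => 1) (fun _ => 1) (fun _ => 1) vlachBound t g) ∧
      (∀ a g, ∑ t, y t a g =
        margA 2 2 2 (fun _ => 1) (fun _ => 1) vlachBound a g) ∧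
      (∀ t a g, y t a g = 0 ∨ y t a g = 1 / 2)) ∧
    ¬ (∃ z : Fin 3 → Fin 2 × Fin 2 → (Fin 2 ⊕ Fin 2 ⊕ Fin 2) → ℕ,
      (∀ t a, ∑ g, (z t a g : ℝ) =
        margT 2 2 2 (fun _ => 1) (fun _ => 1) vlachBound t a) ∧
      (∀ t g, ∑ a, (z t a g : ℝ) =
        margG 2 2 2 (fun _ => 1) (fun _ => 1) (fun _ => 1) vlachBound t g) ∧
      (∀ a g, ∑ t, (z t a g : ℝ) =
        margA 2 2 2 (fun _ => 1) (fun _ => 1) vlachBound a g)) := by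
  constructor
  · have hmem := vlachHalfTable_eq_zero_or_half
    obtain ⟨hT, hG, hA⟩ : HasConstructionMargins _ _ (fun _ => 1) vlachBound vlachHalfTable :=
      hasConstructionMargins_liftTable hasPlaneSums_half_vlachBound
    refine ⟨vlachHalfTable, fun t a g => ?_, hT, hG, hA, hmem⟩
    rcases hmem t a g with h | h <;> norm_num [h]
  · rintro ⟨z, hm⟩
    replace hm : HasConstructionMargins _ _ _ vlachBound fun t a g => (z t a g : ℝ) := hm
    have hz : ∀ t a g, 0 ≤ (z t a g : ℝ) := fun _ _ _ => Nat.cast_nonneg _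
    refine not_hasPlaneSums_of_le_vlachBound (x := fun i j k => z 0 (i, j) (inl k))
      (fun i j k => ?_) (hm.hasPlaneSums hz).of_natCast
    exact_mod_cast hm.apply_zero_dom_le hz (i, j) k
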